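/- arXiv:1605.01364 — 3 statements merged into one kernel-verified Lean document; each statement's English description precedes it below -/
import Mathlib

section
/- Let {y(j)}_{j=0}^∞ and {φ(j)}_{j=0}^∞ be sequences of nonnegative reals, and let K, g, β > 0, a ∈ (0,1) be constants and m a positive integer. Suppose for every j ∈ {0,...,m}: (P1) if y(j) ≤ K·φ(j) then φ(j+1) ≤ a·φ(j) + g, and (P2) if y(j) ≥ K·φ(j) then φ(j+1) ≤ β·y(j) + g. Then for every j ∈ {0,...,m}: φ(j) ≤ max( max(K⁻¹, β) · max_{0≤s≤j} y(s), a^j · φ(0) ) + g/(1−a). -/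
open Finset

theorem stmt_0 (y φ : ℕ → ℝ) (K g β a : ℝ) (m : ℕ)
    (hy : ∀ j, 0 ≤ y j) (hφ : ∀ j, 0 ≤ φ j)
    (hK : 0 < K) (hg : 0 < g) (hβ : 0 < β) (ha : a ∈ Set.Ioo (0:ℝ) 1) (hm : 0 < m)
    (hP1 : ∀ j ≤ m, y j ≤ K * φ j → φ (j+1) ≤ a * φ j + g)
    (hP2 : ∀ j ≤ m, y j ≥ K * φ j → φ (j+1) ≤ β * y j + g) :
    ∀ j ≤ m, φ j ≤ max (max K⁻¹ β * (Finset.Icc 0 j).sup' (by simp) y) (a ^ j * φ 0)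
      + g / (1 - a) := by
  obtain ⟨ha0, ha1⟩ := ha
  have h1a : 0 < 1 - a := by linarith
  have hgle : g ≤ g / (1 - a) := by
    rw [le_div_iff₀ h1a]; nlinarith
  intro j
  induction j with
  | zero =>
    intro _
    have : φ 0 ≤ a ^ 0 * φ 0 := by simp
    have hpos : 0 < g / (1 - a) := div_pos hg h1a
    calc φ 0 ≤ a ^ 0 * φ 0 := this
      _ ≤ max (max K⁻¹ β * (Finset.Icc 0 0).sup' (by simp) y) (a ^ 0 * φ 0) := le_max_right _ _
      _ ≤ _ := by linarith
  | succ j ih =>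
    intro hj
    have hjm : j ≤ m := Nat.le_of_succ_le hj
    have ihj := ih hjm
    -- sup monotone
    have hsup : (Finset.Icc 0 j).sup' (by simp) y ≤ (Finset.Icc 0 (j+1)).sup' (by simp) y := by
      apply Finset.sup'_le
      intro s hs
      apply Finset.le_sup'
      simp at hs ⊢; omega
    have hyj : y j ≤ (Finset.Icc 0 (j+1)).sup' (by simp) y := by
      apply Finset.le_sup'
      simp
    have hsupnn : 0 ≤ (Finset.Icc 0 j).sup' (by simp) y := by
      obtain ⟨s, hs, hle⟩ := Finset.exists_mem_eq_sup' (by simp : (Finset.Icc 0 j).Nonempty) y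
      rw [hle]; exact hy s
    have hmaxnn : (0:ℝ) ≤ max K⁻¹ β := le_max_of_le_right hβ.le
    rcases le_total (y j) (K * φ j) with hcase | hcase
    · have h1 := hP1 j hjm hcase
      set M := max K⁻¹ β * (Finset.Icc 0 j).sup' (by simp) y with hM
      set M' := max K⁻¹ β * (Finset.Icc 0 (j+1)).sup' (by simp) y with hM'
      have hMM' : M ≤ M' := mul_le_mul_of_nonneg_left hsup hmaxnn
      have key : a * max M (a ^ j * φ 0) ≤ max M' (a ^ (j+1) * φ 0) := by
        rcases le_total M (a ^ j * φ 0) with h | h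
        · rw [max_eq_right h]
          apply le_max_of_le_right
          rw [pow_succ]; ring_nf; nlinarith [pow_nonneg ha0.le j, hφ 0]
        · rw [max_eq_left h]
          apply le_max_of_le_left
          have hMnn : 0 ≤ M := mul_nonneg hmaxnn hsupnn
          nlinarith
      have heq : a * (g / (1 - a)) + g = g / (1 - a) := by
        field_simp; ring
      calc φ (j+1) ≤ a * φ j + g := h1
        _ ≤ a * (max M (a ^ j * φ 0) + g / (1 - a)) + g :=
            by nlinarith [ihj]
        _ = a * max M (a ^ j * φ 0) + (a * (g / (1 - a)) + g) := by ring
        _ ≤ max M' (a ^ (j+1) * φ 0) + g / (1 - a) := by rw [heq]; linarith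
    · have h2 := hP2 j hjm hcase
      have hβle : β ≤ max K⁻¹ β := le_max_right _ _
      calc φ (j+1) ≤ β * y j + g := h2
        _ ≤ max K⁻¹ β * (Finset.Icc 0 (j+1)).sup' (by simp) y + g := by
            have := mul_le_mul hβle hyj (hy j) hmaxnn
            linarith
        _ ≤ max (max K⁻¹ β * (Finset.Icc 0 (j+1)).sup' (by simp) y) (a ^ (j+1) * φ 0)
            + g / (1 - a) := add_le_add (le_max_left _ _) hgle
end

section
/- For every σ > 0, M ≥ 1 and ε > 0 there exists δ ∈ (0, σ) with the following property: if φ, y : [0,∞) → [0,∞) are locally bounded functions and γ ≥ 0 is a constant such that φ(t) ≤ M·exp(−σ(t−t₀))·φ(t₀) + γ·sup_{t₀≤s≤t} y(s) for all 0 ≤ t₀ ≤ t, then φ(t) ≤ M·exp(−δt)·φ(0) + γ(1+ε)·sup_{0≤s≤t}( y(s)·exp(−δ(t−s)) ) for all t ≥ 0. -/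
/-!
Induct over windows of length `T`. Applying the hypothesis on `[t - T, t]` multiplies the
`φ 0`-term by `ρ = M e^{-(σ-δ)T}` relative to the target rate `e^{-δt}`, while the weighted
supremum `Y t = sup_{0 ≤ s ≤ t} y s e^{-δ(t-s)}` grows by at most `e^{δT}` over the window, so the
induction closes as soon as `ρ (1 + ε) + e^{δT} ≤ 1 + ε`. This holds after taking `T` large
(so `ρ (1 + ε) ≤ ε / 2` for all `δ ≤ σ / 2`) and then `δ` small (so `e^{δT} ≤ 1 + ε / 2`).
-/

open Real Set Filter Topology

noncomputable def weightedSup (y : ℝ → ℝ) (δ t : ℝ) : ℝ :=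
  sSup ((fun s => y s * exp (-δ * (t - s))) '' Icc 0 t)

def ISSEstimate (σ M γ : ℝ) (φ y : ℝ → ℝ) : Prop :=
  ∀ t₀ t, 0 ≤ t₀ → t₀ ≤ t → φ t ≤ M * exp (-σ * (t - t₀)) * φ t₀ + γ * sSup (y '' Icc t₀ t)

section weightedSup

variable {y : ℝ → ℝ} {δ : ℝ}

theorem bddAbove_weightedSup_image (hy : ∀ t, 0 ≤ y t) (hyb : ∀ T, BddAbove (y '' Icc 0 T))
    (hδ : 0 ≤ δ) (t : ℝ) : BddAbove ((fun s => y s * exp (-δ * (t - s))) '' Icc 0 t) := by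
  obtain ⟨B, hB⟩ := hyb t
  refine ⟨B, ?_⟩
  rintro _ ⟨s, hs, rfl⟩
  have hexp : exp (-δ * (t - s)) ≤ 1 := exp_le_one_iff.mpr (by nlinarith [hs.2])
  calc y s * exp (-δ * (t - s)) ≤ y s := mul_le_of_le_one_right (hy s) hexp
    _ ≤ B := hB (mem_image_of_mem y hs)

theorem le_weightedSup (hy : ∀ t, 0 ≤ y t) (hyb : ∀ T, BddAbove (y '' Icc 0 T)) (hδ : 0 ≤ δ)
    {s t : ℝ} (hs : s ∈ Icc 0 t) : y s * exp (-δ * (t - s)) ≤ weightedSup y δ t :=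
  le_csSup (bddAbove_weightedSup_image hy hyb hδ t) ⟨s, hs, rfl⟩

theorem weightedSup_nonneg (hy : ∀ t, 0 ≤ y t) (hyb : ∀ T, BddAbove (y '' Icc 0 T))
    (hδ : 0 ≤ δ) {t : ℝ} (ht : 0 ≤ t) : 0 ≤ weightedSup y δ t :=
  (mul_nonneg (hy 0) (exp_pos _).le).trans (le_weightedSup hy hyb hδ ⟨le_rfl, ht⟩)

theorem le_exp_mul_weightedSup (hy : ∀ t, 0 ≤ y t) (hyb : ∀ T, BddAbove (y '' Icc 0 T))
    (hδ : 0 ≤ δ) {s t : ℝ} (hs : s ∈ Icc 0 t) : y s ≤ exp (δ * (t - s)) * weightedSup y δ t := by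
  have h := mul_le_mul_of_nonneg_left (le_weightedSup hy hyb hδ hs) (exp_pos (δ * (t - s))).le
  rwa [mul_left_comm, ← exp_add, show δ * (t - s) + -δ * (t - s) = 0 by ring, exp_zero,
    mul_one] at h

theorem sSup_image_Icc_le_weightedSup (hy : ∀ t, 0 ≤ y t) (hyb : ∀ T, BddAbove (y '' Icc 0 T))
    (hδ : 0 ≤ δ) {a t : ℝ} (ha : 0 ≤ a) (hat : a ≤ t) :
    sSup (y '' Icc a t) ≤ exp (δ * (t - a)) * weightedSup y δ t := by
  refine csSup_le (nonempty_Icc.mpr hat |>.image y) ?_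
  rintro _ ⟨s, hs, rfl⟩
  calc y s ≤ exp (δ * (t - s)) * weightedSup y δ t :=
        le_exp_mul_weightedSup hy hyb hδ ⟨ha.trans hs.1, hs.2⟩
    _ ≤ exp (δ * (t - a)) * weightedSup y δ t := by
        gcongr
        · exact weightedSup_nonneg hy hyb hδ (ha.trans hat)
        · linarith [hs.1]

theorem weightedSup_le_exp_mul_weightedSup (hy : ∀ t, 0 ≤ y t)
    (hyb : ∀ T, BddAbove (y '' Icc 0 T)) (hδ : 0 ≤ δ) {s t : ℝ} (hs : 0 ≤ s) (hst : s ≤ t) :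
    weightedSup y δ s ≤ exp (δ * (t - s)) * weightedSup y δ t := by
  refine csSup_le (nonempty_Icc.mpr hs |>.image _) ?_
  rintro _ ⟨r, hr, rfl⟩
  calc y r * exp (-δ * (s - r))
      ≤ exp (δ * (t - r)) * weightedSup y δ t * exp (-δ * (s - r)) := by
        gcongr
        exact le_exp_mul_weightedSup hy hyb hδ ⟨hr.1, hr.2.trans hst⟩
    _ = exp (δ * (t - s)) * weightedSup y δ t := by
        rw [mul_right_comm, ← exp_add]
        ring_nf

end weightedSup

section ISSEstimate

variable {σ δ T M c γ : ℝ} {φ y : ℝ → ℝ}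

theorem le_of_issEstimate_of_le (hδ : 0 ≤ δ) (hδσ : δ ≤ σ) (hM : 0 ≤ M)
    (hexp : exp (δ * T) ≤ c) (hγ : 0 ≤ γ) (hφ : 0 ≤ φ 0) (hy : ∀ t, 0 ≤ y t)
    (hyb : ∀ T, BddAbove (y '' Icc 0 T)) (hiss : ISSEstimate σ M γ φ y) {t : ℝ} (ht : 0 ≤ t)
    (htT : t ≤ T) : φ t ≤ M * exp (-δ * t) * φ 0 + γ * c * weightedSup y δ t := by
  have hiss₀ := hiss 0 t le_rfl ht
  have hsup := sSup_image_Icc_le_weightedSup hy hyb hδ le_rfl ht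
  rw [sub_zero] at hiss₀ hsup
  have hY := weightedSup_nonneg hy hyb hδ ht
  calc φ t ≤ M * exp (-σ * t) * φ 0 + γ * sSup (y '' Icc 0 t) := hiss₀
    _ ≤ M * exp (-δ * t) * φ 0 + γ * (exp (δ * t) * weightedSup y δ t) := by
        gcongr
    _ ≤ M * exp (-δ * t) * φ 0 + γ * (c * weightedSup y δ t) := by
        gcongr
        exact (exp_le_exp.mpr (by nlinarith)).trans hexp
    _ = M * exp (-δ * t) * φ 0 + γ * c * weightedSup y δ t := by ring

theorem le_of_issEstimate_of_le_sub (hδ : 0 ≤ δ) (hT : 0 ≤ T) (hM : 0 ≤ M) (hc : 0 ≤ c)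
    (hρ : M * exp (-(σ - δ) * T) ≤ 1) (hkey : M * exp (-(σ - δ) * T) * c + exp (δ * T) ≤ c)
    (hγ : 0 ≤ γ) (hφ : 0 ≤ φ 0) (hy : ∀ t, 0 ≤ y t) (hyb : ∀ T, BddAbove (y '' Icc 0 T))
    (hiss : ISSEstimate σ M γ φ y) {t : ℝ} (hTt : T ≤ t)
    (hprev : φ (t - T) ≤ M * exp (-δ * (t - T)) * φ 0 + γ * c * weightedSup y δ (t - T)) :
    φ t ≤ M * exp (-δ * t) * φ 0 + γ * c * weightedSup y δ t := by
  set ρ := M * exp (-(σ - δ) * T)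
  set Y := weightedSup y δ t
  have hiss' := hiss (t - T) t (by linarith) (by linarith)
  have hsup := sSup_image_Icc_le_weightedSup hy hyb hδ (by linarith) (by linarith : t - T ≤ t)
  have hshift := weightedSup_le_exp_mul_weightedSup hy hyb hδ (by linarith) (by linarith : t - T ≤ t)
  rw [sub_sub_cancel] at hiss' hsup hshift
  have e1 : exp (-σ * T) = exp (-(σ - δ) * T) * exp (-δ * T) := by rw [← exp_add]; ring_nf
  have e2 : exp (-δ * T) * exp (-δ * (t - T)) = exp (-δ * t) := by rw [← exp_add]; ring_nf
  have e3 : exp (-δ * T) * exp (δ * T) = 1 := by rw [← exp_add]; simp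
  calc φ t ≤ M * exp (-σ * T) * φ (t - T) + γ * sSup (y '' Icc (t - T) t) := hiss'
    _ ≤ M * exp (-σ * T) * (M * exp (-δ * (t - T)) * φ 0 + γ * c * (exp (δ * T) * Y)) +
          γ * (exp (δ * T) * Y) := by
        gcongr
        exact hprev.trans (by gcongr)
    _ = ρ * (M * exp (-δ * t) * φ 0) + γ * (ρ * c + exp (δ * T)) * Y := by
        rw [e1]
        linear_combination (ρ * M * φ 0) * e2 + (ρ * γ * c * Y) * e3
    _ ≤ 1 * (M * exp (-δ * t) * φ 0) + γ * c * Y := by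
        have := weightedSup_nonneg hy hyb hδ (hT.trans hTt)
        gcongr
    _ = M * exp (-δ * t) * φ 0 + γ * c * Y := by rw [one_mul]

end ISSEstimate

theorem le_of_issEstimate {σ δ T M c γ : ℝ} {φ y : ℝ → ℝ} (hδ : 0 ≤ δ) (hδσ : δ ≤ σ) (hT : 0 < T)
    (hM : 0 ≤ M) (hc : 0 < c) (hkey : M * exp (-(σ - δ) * T) * c + exp (δ * T) ≤ c)
    (hγ : 0 ≤ γ) (hφ : 0 ≤ φ 0) (hy : ∀ t, 0 ≤ y t) (hyb : ∀ T, BddAbove (y '' Icc 0 T))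
    (hiss : ISSEstimate σ M γ φ y) {t : ℝ} (ht : 0 ≤ t) :
    φ t ≤ M * exp (-δ * t) * φ 0 + γ * c * weightedSup y δ t := by
  have hρ₀ : 0 ≤ M * exp (-(σ - δ) * T) * c := by positivity
  have hexp : exp (δ * T) ≤ c := by linarith
  have hρ : M * exp (-(σ - δ) * T) ≤ 1 :=
    (mul_le_iff_le_one_left hc).mp (by linarith [one_le_exp (by positivity : 0 ≤ δ * T)])
  suffices ∀ n : ℕ, ∀ t, 0 ≤ t → t ≤ n * T →
      φ t ≤ M * exp (-δ * t) * φ 0 + γ * c * weightedSup y δ t by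
    obtain ⟨n, hn⟩ := exists_nat_ge (t / T)
    exact this n t ht ((div_le_iff₀ hT).mp hn)
  intro n
  induction n with
  | zero =>
    intro t ht htn
    exact le_of_issEstimate_of_le hδ hδσ hM hexp hγ hφ hy hyb hiss ht (by simp at htn; linarith)
  | succ n ih =>
    intro t ht htn
    rcases le_total t T with htT | hTt
    · exact le_of_issEstimate_of_le hδ hδσ hM hexp hγ hφ hy hyb hiss ht htT
    · refine le_of_issEstimate_of_le_sub hδ hT.le hM hc.le hρ hkey hγ hφ hy hyb hiss hTt ?_
      exact ih (t - T) (by linarith) (by push_cast at htn; linarith)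

theorem exists_decay_params {σ M c : ℝ} (hσ : 0 < σ) (hM : 0 ≤ M) (hc : 1 < c) :
    ∃ δ ∈ Ioo 0 σ, ∃ T > 0, M * exp (-(σ - δ) * T) * c + exp (δ * T) ≤ c := by
  obtain ⟨T, hT, hTsmall⟩ : ∃ T > 0, M * exp (-(σ / 2) * T) * c ≤ (c - 1) / 2 := by
    have hlim : Tendsto (fun T => M * exp (-(σ / 2) * T) * c) atTop (𝓝 0) := by
      have h := tendsto_exp_atBot.comp
        (tendsto_id.const_mul_atTop_of_neg (by linarith : -(σ / 2) < 0))
      simpa using (h.const_mul M).mul_const c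
    exact ((eventually_gt_atTop 0).and
      (hlim.eventually (ge_mem_nhds (by linarith : (0 : ℝ) < (c - 1) / 2)))).exists
  obtain ⟨δ, ⟨hδσ, hδT⟩, hδ⟩ : ∃ δ, (δ < σ / 2 ∧ exp (δ * T) < (c + 1) / 2) ∧ 0 < δ := by
    have hlim : Tendsto (fun δ => exp (δ * T)) (𝓝 0) (𝓝 1) := by
      simpa using (by fun_prop : Continuous fun δ => exp (δ * T)).tendsto 0
    have h := (eventually_lt_nhds (by linarith : 0 < σ / 2)).and
      (hlim.eventually (gt_mem_nhds (by linarith : 1 < (c + 1) / 2)))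
    exact ((h.filter_mono nhdsWithin_le_nhds).and self_mem_nhdsWithin).exists (f := 𝓝[>] 0)
  refine ⟨δ, ⟨hδ, by linarith⟩, T, hT, ?_⟩
  have : M * exp (-(σ - δ) * T) * c ≤ M * exp (-(σ / 2) * T) * c := by
    gcongr
    nlinarith
  linarith

theorem stmt_1 (σ M ε : ℝ) (hσ : 0 < σ) (hM : 1 ≤ M) (hε : 0 < ε) :
    ∃ δ : ℝ, δ ∈ Set.Ioo 0 σ ∧
      ∀ (φ y : ℝ → ℝ) (γ : ℝ), 0 ≤ γ →
        (∀ t, 0 ≤ φ t) → (∀ t, 0 ≤ y t) →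
        (∀ T : ℝ, BddAbove (φ '' Set.Icc 0 T) ∧ BddAbove (y '' Set.Icc 0 T)) →
        (∀ t₀ t : ℝ, 0 ≤ t₀ → t₀ ≤ t →
          φ t ≤ M * Real.exp (-σ * (t - t₀)) * φ t₀ + γ * sSup (y '' Set.Icc t₀ t)) →
        ∀ t : ℝ, 0 ≤ t →
          φ t ≤ M * Real.exp (-δ * t) * φ 0 +
            γ * (1 + ε) * sSup ((fun s => y s * Real.exp (-δ * (t - s))) '' Set.Icc 0 t) := by
  have hM₀ : 0 ≤ M := by linarith
  obtain ⟨δ, hδ, T, hT, hkey⟩ := exists_decay_params hσ hM₀ (by linarith : 1 < 1 + ε)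
  refine ⟨δ, hδ, fun φ y γ hγ hφ hy hbdd hiss t ht => ?_⟩
  exact le_of_issEstimate hδ.1.le hδ.2.le hT hM₀ (by linarith) hkey hγ (hφ 0) hy
    (fun T => (hbdd T).2) hiss ht
end

section
/- For every σ > 0, M ≥ 1 and ε > 0 there exists δ ∈ (0, σ] with the following property: if q, y : [0,∞) → [0,∞) are locally bounded functions and γ ≥ 0 is a constant such that q(t) ≤ max( M·exp(−σ(t−t₀))·q(t₀), γ·sup_{t₀≤s≤t} y(s) ) for all 0 ≤ t₀ ≤ t, then q(t) ≤ max( M·exp(−δt)·q(0), γ(1+ε)·sup_{0≤s≤t}( y(s)·exp(−δ(t−s)) ) ) for all t ≥ 0. -/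
/-!
Choose a window length `T` so long that one window of the hypothesis contracts the decay term,
`M e^{-σT} ≤ e^{-δT}`, and `δ` so small that the exponential weight loses at most a factor
`e^{δT} ≤ 1 + ε` across one window. Applying the hypothesis on `[t - T, t]` then carries the bound
from `t - T` to `t`, and induction over windows covers all `t ≥ 0`.
-/

open Real Set

lemma exists_window_constants {σ M ε : ℝ} (hσ : 0 < σ) (hM : 1 ≤ M) (hε : 0 < ε) :
    ∃ T δ : ℝ, 0 < T ∧ δ ∈ Ioc 0 σ ∧
      M * exp (-σ * T) * exp (δ * T) ≤ 1 ∧ exp (δ * T) ≤ 1 + ε := by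
  have hlogM := log_nonneg hM
  set T := (2 * log M + 1) / σ with hT_def
  have hT : 0 < T := by positivity
  have hσT : σ * T = 2 * log M + 1 := by rw [hT_def]; field_simp
  have hlog : 0 < log (1 + ε) := log_pos (by linarith)
  set δ := min (σ / 2) (log (1 + ε) / T)
  have hδT : δ * T ≤ log (1 + ε) := (le_div_iff₀ hT).1 (min_le_right _ _)
  have hδσ : δ * T ≤ σ / 2 * T := mul_le_mul_of_nonneg_right (min_le_left _ _) hT.le
  have hδ_le : δ ≤ σ := (min_le_left _ _).trans (by linarith)
  refine ⟨T, δ, hT, ⟨lt_min (by linarith) (by positivity), hδ_le⟩, ?_, ?_⟩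
  · calc M * exp (-σ * T) * exp (δ * T) = exp (log M + -σ * T + δ * T) := by
          rw [exp_add, exp_add, exp_log (by linarith)]
      _ ≤ exp 0 := exp_le_exp.2 (by nlinarith)
      _ = 1 := exp_zero
  · calc exp (δ * T) ≤ exp (log (1 + ε)) := exp_le_exp.2 hδT
      _ = 1 + ε := exp_log (by linarith)

lemma forall_nonneg_of_window_step {P : ℝ → Prop} {T : ℝ} (hT : 0 < T)
    (base : ∀ t ∈ Icc 0 T, P t) (step : ∀ t, T < t → P (t - T) → P t) :
    ∀ t, 0 ≤ t → P t := by
  have windows : ∀ n : ℕ, ∀ t ∈ Icc 0 ((n + 1) * T), P t := by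
    intro n
    induction n with
    | zero => simpa using base
    | succ n ih =>
      rintro t ⟨ht0, htn⟩
      rcases le_or_gt t T with htT | hTt
      · exact base t ⟨ht0, htT⟩
      · exact step t hTt (ih _ ⟨by linarith, by push_cast at htn; linarith⟩)
  intro t ht
  obtain ⟨n, hn⟩ := exists_nat_ge (t / T)
  exact windows n t ⟨ht, by rw [div_le_iff₀ hT] at hn; nlinarith⟩

noncomputable def expWeightedSup (y : ℝ → ℝ) (δ t : ℝ) : ℝ :=
  sSup ((fun s => y s * exp (-δ * (t - s))) '' Icc 0 t)

section expWeightedSup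

variable {y : ℝ → ℝ} {δ t : ℝ}

lemma expWeightedSup_nonneg (hy : ∀ s, 0 ≤ y s) : 0 ≤ expWeightedSup y δ t :=
  Real.sSup_nonneg (by rintro _ ⟨s, -, rfl⟩; exact mul_nonneg (hy s) (exp_pos _).le)

lemma le_expWeightedSup (hy : ∀ s, 0 ≤ y s) (hδ : 0 ≤ δ) (hbdd : BddAbove (y '' Icc 0 t))
    {s : ℝ} (hs : s ∈ Icc 0 t) : y s * exp (-δ * (t - s)) ≤ expWeightedSup y δ t := by
  refine le_csSup ?_ (mem_image_of_mem _ hs)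
  obtain ⟨B, hB⟩ := hbdd
  refine ⟨B, ?_⟩
  rintro _ ⟨u, hu, rfl⟩
  have hexp : exp (-δ * (t - u)) ≤ 1 := exp_le_one_iff.2 (by nlinarith [hu.2])
  calc y u * exp (-δ * (t - u)) ≤ y u * 1 := mul_le_mul_of_nonneg_left hexp (hy u)
    _ ≤ B := by simpa using hB (mem_image_of_mem _ hu)

lemma expWeightedSup_le_exp_mul (hy : ∀ s, 0 ≤ y s) (hδ : 0 ≤ δ)
    (hbdd : BddAbove (y '' Icc 0 t)) {t' : ℝ} (ht' : t' ≤ t) :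
    expWeightedSup y δ t' ≤ exp (δ * (t - t')) * expWeightedSup y δ t := by
  refine Real.sSup_le ?_ (mul_nonneg (exp_pos _).le (expWeightedSup_nonneg hy))
  rintro _ ⟨s, hs, rfl⟩
  calc y s * exp (-δ * (t' - s)) = exp (δ * (t - t')) * (y s * exp (-δ * (t - s))) := by
        rw [mul_left_comm, ← exp_add]; ring_nf
    _ ≤ exp (δ * (t - t')) * expWeightedSup y δ t :=
        mul_le_mul_of_nonneg_left (le_expWeightedSup hy hδ hbdd ⟨hs.1, hs.2.trans ht'⟩)
          (exp_pos _).le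

lemma sSup_image_Icc_le_exp_mul (hy : ∀ s, 0 ≤ y s) (hδ : 0 ≤ δ)
    (hbdd : BddAbove (y '' Icc 0 t)) {t₀ : ℝ} (ht₀ : 0 ≤ t₀) :
    sSup (y '' Icc t₀ t) ≤ exp (δ * (t - t₀)) * expWeightedSup y δ t := by
  refine Real.sSup_le ?_ (mul_nonneg (exp_pos _).le (expWeightedSup_nonneg hy))
  rintro _ ⟨s, hs, rfl⟩
  calc y s = exp (δ * (t - s)) * (y s * exp (-δ * (t - s))) := by
        rw [mul_left_comm, ← exp_add]; ring_nf; rw [exp_zero, mul_one]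
    _ ≤ exp (δ * (t - t₀)) * expWeightedSup y δ t :=
        mul_le_mul (exp_le_exp.2 (by nlinarith [hs.1])) (le_expWeightedSup hy hδ hbdd
          ⟨ht₀.trans hs.1, hs.2⟩) (mul_nonneg (hy s) (exp_pos _).le) (exp_pos _).le

end expWeightedSup

section window

variable {q y : ℝ → ℝ} {σ δ M γ ε T t : ℝ}

lemma mul_sSup_window_le (hγ : 0 ≤ γ) (hy : ∀ s, 0 ≤ y s) (hδ : 0 ≤ δ)
    (hbdd : BddAbove (y '' Icc 0 t)) (hgrowth : exp (δ * T) ≤ 1 + ε) {t₀ : ℝ} (ht₀ : 0 ≤ t₀)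
    (hwindow : t - t₀ ≤ T) :
    γ * sSup (y '' Icc t₀ t) ≤ γ * (1 + ε) * expWeightedSup y δ t := by
  have hexp : exp (δ * (t - t₀)) ≤ 1 + ε :=
    (exp_le_exp.2 (mul_le_mul_of_nonneg_left hwindow hδ)).trans hgrowth
  calc γ * sSup (y '' Icc t₀ t) ≤ γ * (exp (δ * (t - t₀)) * expWeightedSup y δ t) :=
        mul_le_mul_of_nonneg_left (sSup_image_Icc_le_exp_mul hy hδ hbdd ht₀) hγ
    _ ≤ γ * ((1 + ε) * expWeightedSup y δ t) :=
        mul_le_mul_of_nonneg_left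
          (mul_le_mul_of_nonneg_right hexp (expWeightedSup_nonneg hy)) hγ
    _ = γ * (1 + ε) * expWeightedSup y δ t := by ring

lemma mul_max_prev_window_le (hM : 0 ≤ M) (hq : 0 ≤ q 0) (hγ : 0 ≤ γ) (hε : 0 ≤ 1 + ε)
    (hy : ∀ s, 0 ≤ y s) (hδ : 0 ≤ δ) (hbdd : BddAbove (y '' Icc 0 t)) (hT : 0 ≤ T)
    (hcontract : M * exp (-σ * T) * exp (δ * T) ≤ 1) :
    M * exp (-σ * T) *
        max (M * exp (-δ * (t - T)) * q 0) (γ * (1 + ε) * expWeightedSup y δ (t - T)) ≤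
      max (M * exp (-δ * t) * q 0) (γ * (1 + ε) * expWeightedSup y δ t) := by
  have hshift := expWeightedSup_le_exp_mul hy hδ hbdd (sub_le_self t hT)
  rw [sub_sub_cancel] at hshift
  rw [mul_max_of_nonneg _ _ (by positivity)]
  apply max_le_max
  · calc M * exp (-σ * T) * (M * exp (-δ * (t - T)) * q 0)
          = M * exp (-σ * T) * exp (δ * T) * (M * exp (-δ * t) * q 0) := by
          rw [show -δ * (t - T) = δ * T + -δ * t by ring, exp_add]; ring
      _ ≤ 1 * (M * exp (-δ * t) * q 0) := by gcongr
      _ = M * exp (-δ * t) * q 0 := one_mul _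
  · calc M * exp (-σ * T) * (γ * (1 + ε) * expWeightedSup y δ (t - T))
          ≤ M * exp (-σ * T) * (γ * (1 + ε) * (exp (δ * T) * expWeightedSup y δ t)) := by
          gcongr
      _ = M * exp (-σ * T) * exp (δ * T) * (γ * (1 + ε) * expWeightedSup y δ t) := by ring
      _ ≤ 1 * (γ * (1 + ε) * expWeightedSup y δ t) := by
          gcongr; exact mul_nonneg (mul_nonneg hγ hε) (expWeightedSup_nonneg hy)
      _ = γ * (1 + ε) * expWeightedSup y δ t := one_mul _

end window

theorem stmt_2 (σ M ε : ℝ) (hσ : 0 < σ) (hM : 1 ≤ M) (hε : 0 < ε) :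
    ∃ δ : ℝ, δ ∈ Set.Ioc 0 σ ∧
      ∀ (q y : ℝ → ℝ) (γ : ℝ), 0 ≤ γ →
        (∀ t, 0 ≤ q t) → (∀ t, 0 ≤ y t) →
        (∀ T : ℝ, BddAbove (q '' Set.Icc 0 T) ∧ BddAbove (y '' Set.Icc 0 T)) →
        (∀ t₀ t : ℝ, 0 ≤ t₀ → t₀ ≤ t →
          q t ≤ max (M * Real.exp (-σ * (t - t₀)) * q t₀) (γ * sSup (y '' Set.Icc t₀ t))) →
        ∀ t : ℝ, 0 ≤ t →
          q t ≤ max (M * Real.exp (-δ * t) * q 0)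
            (γ * (1 + ε) * sSup ((fun s => y s * Real.exp (-δ * (t - s))) '' Set.Icc 0 t)) := by
  obtain ⟨T, δ, hT, hδ, hcontract, hgrowth⟩ := exists_window_constants hσ hM hε
  refine ⟨δ, hδ, fun q y γ hγ hq hy hbdd hiss => ?_⟩
  have hM0 : 0 ≤ M := by linarith
  have hδ0 : 0 ≤ δ := hδ.1.le
  refine forall_nonneg_of_window_step (P := fun t =>
    q t ≤ max (M * exp (-δ * t) * q 0) (γ * (1 + ε) * expWeightedSup y δ t)) hT ?_ ?_
  · rintro t ⟨ht0, htT⟩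
    refine (hiss 0 t le_rfl ht0).trans (max_le_max ?_ ?_)
    · have hdecay : exp (-σ * (t - 0)) ≤ exp (-δ * t) := exp_le_exp.2 (by nlinarith [hδ.2])
      gcongr
      exact hq 0
    · exact mul_sSup_window_le hγ hy hδ0 (hbdd t).2 hgrowth le_rfl (by linarith)
  · intro t hTt ih
    have hwindow := hiss (t - T) t (by linarith) (by linarith)
    rw [sub_sub_cancel] at hwindow
    refine hwindow.trans (max_le ?_ (le_max_of_le_right ?_))
    · exact (mul_le_mul_of_nonneg_left ih (by positivity)).trans
        (mul_max_prev_window_le hM0 (hq 0) hγ (by linarith) hy hδ0 (hbdd t).2 hT.le hcontract)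
    · exact mul_sSup_window_le hγ hy hδ0 (hbdd t).2 hgrowth (by linarith) (sub_sub_cancel t T).le
end
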